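/- arXiv:1304.7997 — 2 statements merged into one kernel-verified Lean document; each statement's English description precedes it below -/
import Mathlib

section
/- The Grundy value of the odd/odd vertex removal game on a grid graph is either 0 or 1. -/
/-!
Deleting a vertex of odd degree removes an odd number of edges, so every option of a position
has the opposite edge parity to the position itself. In a bipartite graph the number of edges is
the degree sum over one side, hence a graph with an odd number of edges has a vertex of odd degree,
i.e. a move. Induction on the number of edges then shows that the Grundy value of a bipartite
graph is its number of edges mod 2; grid graphs are bipartite.
-/

open scoped Classical

/-- minimal excludant of a set of naturals -/
noncomputable def mexN (s : Set ℕ) : ℕ := sInf {n | n ∉ s}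

/-- delete a vertex's incident edges (the vertex becomes isolated) -/
def delVert {V : Type*} (G : SimpleGraph V) (v : V) : SimpleGraph V where
  Adj a b := G.Adj a b ∧ a ≠ v ∧ b ≠ v
  symm := ⟨fun a b h => ⟨h.1.symm, h.2.2, h.2.1⟩⟩
  loopless := ⟨fun a h => G.loopless.irrefl a h.1⟩

lemma delVert_le {V : Type*} (G : SimpleGraph V) (v : V) : delVert G v ≤ G := fun _ _ h => h.1

noncomputable def edgeCard {V : Type*} [Fintype V] (G : SimpleGraph V) : ℕ := G.edgeFinset.card

lemma edgeCard_lt {V : Type*} [Fintype V] (G : SimpleGraph V) {v : V} (h : Odd (G.degree v)) :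
    edgeCard (delVert G v) < edgeCard G := by
  apply Finset.card_lt_card
  rw [Finset.ssubset_iff_of_subset (SimpleGraph.edgeFinset_subset_edgeFinset.2 (delVert_le G v))]
  obtain ⟨w, hw⟩ := (G.degree_pos_iff_exists_adj v).1 h.pos
  refine ⟨s(v, w), ?_, ?_⟩
  · simpa [SimpleGraph.mem_edgeFinset] using hw
  · intro hc
    have := SimpleGraph.mem_edgeFinset.1 hc
    rw [SimpleGraph.mem_edgeSet] at this
    exact this.2.1 rfl

noncomputable def grundy {V : Type*} [Fintype V] (G : SimpleGraph V) : ℕ :=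
  mexN {n | ∃ v : {v : V // Odd (G.degree v)}, grundy (delVert G v.1) = n}
termination_by edgeCard G
decreasing_by exact edgeCard_lt G v.2

theorem mexN_eq_zero {s : Set ℕ} (h : 0 ∉ s) : mexN s = 0 :=
  Nat.sInf_eq_zero.2 (Or.inl h)

theorem mexN_eq_one {s : Set ℕ} (h₀ : 0 ∈ s) (h₁ : 1 ∉ s) : mexN s = 1 :=
  le_antisymm (Nat.sInf_le h₁) <| Nat.one_le_iff_ne_zero.2 fun h ↦ by
    rcases Nat.sInf_eq_zero.1 h with h | h
    · exact h h₀
    · exact h.subset h₁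

namespace SimpleGraph

variable {V W α : Type*} {G : SimpleGraph V} {H : SimpleGraph W}

def Coloring.boxProd [AddGroup α] (c : G.Coloring α) (d : H.Coloring α) : (G □ H).Coloring α :=
  Coloring.mk (fun p ↦ c p.1 + d p.2) <| by
    rintro ⟨a₁, a₂⟩ ⟨b₁, b₂⟩ (⟨h, rfl⟩ | ⟨h, rfl⟩)
    · simpa using c.valid h
    · simpa using d.valid h

theorem IsBipartite.boxProd (hG : G.IsBipartite) (hH : H.IsBipartite) : (G □ H).IsBipartite :=
  let ⟨c⟩ := hG
  let ⟨d⟩ := hH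
  ⟨c.boxProd d⟩

theorem isBipartite_pathGraph (n : ℕ) : (pathGraph n).IsBipartite :=
  (pathGraph.bicoloring n).colorable

theorem IsBipartite.even_card_edgeFinset [Fintype V] [DecidableRel G.Adj] (hG : G.IsBipartite)
    (h : ∀ v, Even (G.degree v)) : Even G.edgeFinset.card := by
  obtain ⟨s, t, hst⟩ := hG.exists_isBipartiteWith
  rw [← s.coe_toFinset, ← t.coe_toFinset] at hst
  rw [← isBipartiteWith_sum_degrees_eq_card_edges hst]
  exact Finset.even_sum _ fun v _ ↦ h v

theorem delVert_eq_deleteIncidenceSet (G : SimpleGraph V) (v : V) :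
    delVert G v = G.deleteIncidenceSet v := by
  ext
  rw [deleteIncidenceSet_adj]
  rfl

end SimpleGraph

open SimpleGraph

section

variable {V : Type*} [Fintype V]

theorem edgeCard_delVert_add_degree (G : SimpleGraph V) (v : V) :
    edgeCard (delVert G v) + G.degree v = edgeCard G := by
  have hsdiff : (delVert G v).edgeFinset = G.edgeFinset \ G.incidenceFinset v := by
    rw [← Finset.coe_inj]
    simp [delVert_eq_deleteIncidenceSet, edgeSet_deleteIncidenceSet]
  rw [edgeCard, edgeCard, hsdiff, ← G.card_incidenceFinset_eq_degree,
    Finset.card_sdiff_add_card_eq_card (G.incidenceFinset_subset v)]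

theorem exists_odd_degree_of_odd_edgeCard {G : SimpleGraph V} (hG : G.IsBipartite)
    (h : Odd (edgeCard G)) : ∃ v, Odd (G.degree v) := by
  by_contra! hv
  simp only [Nat.not_odd_iff_even] at hv
  exact Nat.not_even_iff_odd.2 h (by rw [edgeCard]; convert IsBipartite.even_card_edgeFinset hG hv)

theorem grundy_eq_edgeCard_mod_two (G : SimpleGraph V) (hG : G.IsBipartite) :
    grundy G = edgeCard G % 2 := by
  have hmove : ∀ v, Odd (G.degree v) → grundy (delVert G v) = (edgeCard G + 1) % 2 := by
    intro v hv
    have hedges := edgeCard_delVert_add_degree G v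
    rw [grundy_eq_edgeCard_mod_two (delVert G v) (hG.mono_left (delVert_le G v))]
    obtain ⟨k, hk⟩ := hv
    omega
  rw [grundy]
  rcases Nat.mod_two_eq_zero_or_one (edgeCard G) with he | ho
  · rw [mexN_eq_zero, he]
    rintro ⟨⟨v, hv⟩, hg⟩
    rw [hmove v hv] at hg
    omega
  · obtain ⟨v, hv⟩ := exists_odd_degree_of_odd_edgeCard hG (Nat.odd_iff.2 ho)
    rw [mexN_eq_one, ho]
    · exact ⟨⟨v, hv⟩, by rw [hmove v hv]; omega⟩
    · rintro ⟨⟨w, hw⟩, hg⟩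
      rw [hmove w hw] at hg
      omega
termination_by edgeCard G
decreasing_by exact edgeCard_lt G hv

end

/-- The Grundy value of the odd/odd vertex removal game on a grid graph
(the box product of two paths) is either 0 or 1. -/
theorem grundy_grid (m n : ℕ) :
    grundy (SimpleGraph.pathGraph m □ SimpleGraph.pathGraph n) = 0 ∨
      grundy (SimpleGraph.pathGraph m □ SimpleGraph.pathGraph n) = 1 := by
  rw [grundy_eq_edgeCard_mod_two _ ((isBipartite_pathGraph m).boxProd (isBipartite_pathGraph n))]
  exact Nat.mod_two_eq_zero_or_one _
end

section
/- Let G_0, ..., G_K be finite graphs, each having at least two odd-degree vertices, and form G by taking their disjoint union, adding new vertices v_0, ..., v_K (with an extra auxiliary pair v_{-1}, P_3 when K is even so that the number of new vertices is even), joining each v_i to all odd-degree vertices of G_i, and joining all v_i pairwise by a complete graph. Then in G the only odd-degree vertices are the v_i, and deleting v_i from G yields a position whose Grundy value equals that of G_i; consequently g(G) = mex{g(G_i)}. -/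
open scoped Classical

/-- Ottaway-style construction: given a family of graphs `Gs i` (`i : ι`),
take their disjoint union, add one new vertex `vᵢ` for each index `i`,
join `vᵢ` to all odd-degree vertices of `Gs i`, and join the new vertices
pairwise by a complete graph. -/
def bigGraph {ι : Type} [Fintype ι] [DecidableEq ι]
    (Vt : ι → Type) [∀ i, Fintype (Vt i)] (Gs : ∀ i, SimpleGraph (Vt i)) :
    SimpleGraph ((Σ i, Vt i) ⊕ ι) where
  Adj x y :=
    match x, y with
    | Sum.inl ⟨i, a⟩, Sum.inl ⟨j, b⟩ => ∃ h : i = j, (Gs j).Adj (h ▸ a) b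
    | Sum.inl ⟨i, a⟩, Sum.inr j => i = j ∧ Odd ((Gs i).degree a)
    | Sum.inr j, Sum.inl ⟨i, a⟩ => i = j ∧ Odd ((Gs i).degree a)
    | Sum.inr i, Sum.inr j => i ≠ j
  symm := by
    constructor
    rintro (⟨i, a⟩ | i) (⟨j, b⟩ | j) h
    · obtain ⟨rfl, had⟩ := h
      exact ⟨rfl, had.symm⟩
    · exact h
    · exact h
    · exact h.symm
  loopless := by
    constructor
    rintro (⟨i, a⟩ | i) h
    · obtain ⟨_, had⟩ := h
      exact (Gs i).loopless.irrefl a had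
    · exact h rfl

/-!
Every vertex of a `Gᵢ` has even degree in `G`, since exactly its odd-degree vertices gained
the edge to `vᵢ`; and `vᵢ` has degree `#(odd vertices of Gᵢ) + (#new vertices - 1)`, which is
odd because both counts are even. Deleting `vᵢ` leaves `Gᵢ` as a union of components, all
other vertices having even degree. Moves never touch an even part that is cut off from the
rest, so such a position is equivalent to `Gᵢ` itself, and the mex formula follows.
-/

open SimpleGraph Finset

section DelVert

variable {V : Type*} (G : SimpleGraph V)

@[simp]
lemma delVert_adj {v a b : V} : (delVert G v).Adj a b ↔ G.Adj a b ∧ a ≠ v ∧ b ≠ v := Iff.rfl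

variable [Fintype V]

lemma delVert_neighborFinset_of_ne {v w : V} (hwv : w ≠ v) :
    (delVert G v).neighborFinset w = (G.neighborFinset w).erase v := by
  ext u
  simp only [mem_neighborFinset, mem_erase, delVert_adj]
  tauto

lemma delVert_degree_self (v : V) : (delVert G v).degree v = 0 := by
  rw [degree_eq_zero_iff_notMem_support]
  rintro ⟨u, -, hvv, -⟩
  exact hvv rfl

lemma delVert_degree_of_not_adj {v w : V} (hwv : w ≠ v) (h : ¬ G.Adj w v) :
    (delVert G v).degree w = G.degree w := by
  rw [degree, degree, delVert_neighborFinset_of_ne G hwv,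
    erase_eq_of_notMem (by rwa [mem_neighborFinset])]

lemma delVert_degree_of_adj {v w : V} (hwv : w ≠ v) (h : G.Adj w v) :
    (delVert G v).degree w = G.degree w - 1 := by
  rw [degree, degree, delVert_neighborFinset_of_ne G hwv,
    card_erase_of_mem (by rwa [mem_neighborFinset])]

end DelVert

section Embedding

variable {W V : Type*} [Fintype W] [Fintype V]

lemma neighborFinset_embedding {H : SimpleGraph W} {G : SimpleGraph V} {e : W ↪ V}
    (hadj : ∀ a b, G.Adj (e a) (e b) ↔ H.Adj a b)
    (hcross : ∀ a v, v ∉ Set.range e → ¬ G.Adj (e a) v) (a : W) :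
    G.neighborFinset (e a) = (H.neighborFinset a).map e := by
  ext v
  simp only [mem_neighborFinset, mem_map]
  constructor
  · intro h
    by_cases hv : v ∈ Set.range e
    · obtain ⟨b, rfl⟩ := hv
      exact ⟨b, (hadj a b).1 h, rfl⟩
    · exact absurd h (hcross a v hv)
  · rintro ⟨b, hb, rfl⟩
    exact (hadj a b).2 hb

lemma degree_embedding {H : SimpleGraph W} {G : SimpleGraph V} {e : W ↪ V}
    (hadj : ∀ a b, G.Adj (e a) (e b) ↔ H.Adj a b)
    (hcross : ∀ a v, v ∉ Set.range e → ¬ G.Adj (e a) v) (a : W) :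
    G.degree (e a) = H.degree a := by
  rw [degree, degree, neighborFinset_embedding hadj hcross, card_map]

/-- `H` sits in `G` as a union of components and every other vertex has even degree. A move
inside `H` preserves this, so the two games have the same moves. -/
theorem grundy_eq_of_embedding (H : SimpleGraph W) (G : SimpleGraph V) (e : W ↪ V)
    (hadj : ∀ a b, G.Adj (e a) (e b) ↔ H.Adj a b)
    (hcross : ∀ a v, v ∉ Set.range e → ¬ G.Adj (e a) v)
    (heven : ∀ v, v ∉ Set.range e → Even (G.degree v)) :
    grundy G = grundy H := by
  have hdeg := degree_embedding hadj hcross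
  have hmove : ∀ a, Odd (H.degree a) → grundy (delVert G (e a)) = grundy (delVert H a) := by
    intro a ha
    refine grundy_eq_of_embedding (delVert H a) (delVert G (e a)) e
      (fun b c => by simp [hadj, e.injective.ne_iff]) (fun b v hv h => hcross b v hv h.1) ?_
    intro v hv
    rw [delVert_degree_of_not_adj G (fun h => hv ⟨a, h.symm⟩) (fun h => hcross a v hv h.symm)]
    exact heven v hv
  have hodd : ∀ v, Odd (G.degree v) → ∃ a, e a = v ∧ Odd (H.degree a) := by
    intro v hv
    by_cases h : v ∈ Set.range e
    · obtain ⟨a, rfl⟩ := h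
      exact ⟨a, rfl, hdeg a ▸ hv⟩
    · exact absurd (heven v h) (Nat.not_even_iff_odd.2 hv)
  rw [grundy, grundy]
  congr 1
  ext n
  constructor
  · rintro ⟨⟨v, hv⟩, rfl⟩
    obtain ⟨a, rfl, ha⟩ := hodd v hv
    exact ⟨⟨a, ha⟩, (hmove a ha).symm⟩
  · rintro ⟨⟨a, ha⟩, rfl⟩
    exact ⟨⟨e a, hdeg a ▸ ha⟩, hmove a ha⟩
termination_by edgeCard G
decreasing_by exact edgeCard_lt G (hdeg a ▸ ha)

end Embedding

section BigGraph

variable {ι : Type} {Vt : ι → Type}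

def componentEmb (i : ι) : Vt i ↪ (Σ j, Vt j) ⊕ ι :=
  (Function.Embedding.sigmaMk i).trans Function.Embedding.inl

@[simp]
lemma componentEmb_apply (i : ι) (a : Vt i) : componentEmb i a = Sum.inl ⟨i, a⟩ := rfl

variable [Fintype ι] [DecidableEq ι] [∀ i, Fintype (Vt i)] (Gs : ∀ i, SimpleGraph (Vt i))

@[simp]
lemma bigGraph_adj_inl_inl_self {i : ι} {a b : Vt i} :
    (bigGraph Vt Gs).Adj (Sum.inl ⟨i, a⟩) (Sum.inl ⟨i, b⟩) ↔ (Gs i).Adj a b :=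
  ⟨fun ⟨_, h⟩ => h, fun h => ⟨rfl, h⟩⟩

lemma bigGraph_not_adj_inl_inl_of_ne {i j : ι} (hij : i ≠ j) (a : Vt i) (b : Vt j) :
    ¬ (bigGraph Vt Gs).Adj (Sum.inl ⟨i, a⟩) (Sum.inl ⟨j, b⟩) :=
  fun ⟨h, _⟩ => hij h

@[simp]
lemma bigGraph_adj_inl_inr {i j : ι} {a : Vt i} :
    (bigGraph Vt Gs).Adj (Sum.inl ⟨i, a⟩) (Sum.inr j) ↔ i = j ∧ Odd ((Gs i).degree a) :=
  Iff.rfl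

@[simp]
lemma bigGraph_adj_inr_inl {i j : ι} {b : Vt j} :
    (bigGraph Vt Gs).Adj (Sum.inr i) (Sum.inl ⟨j, b⟩) ↔ j = i ∧ Odd ((Gs j).degree b) :=
  Iff.rfl

@[simp]
lemma bigGraph_adj_inr_inr {i j : ι} : (bigGraph Vt Gs).Adj (Sum.inr i) (Sum.inr j) ↔ i ≠ j :=
  Iff.rfl

lemma bigGraph_neighborFinset_inl (i : ι) (a : Vt i) :
    (bigGraph Vt Gs).neighborFinset (Sum.inl ⟨i, a⟩) =
      ((Gs i).neighborFinset a).map (componentEmb i) ∪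
        if Odd ((Gs i).degree a) then {Sum.inr i} else ∅ := by
  ext (⟨j, b⟩ | j)
  · by_cases hij : i = j
    · subst hij
      split_ifs <;> simp
    · split_ifs <;> simp [bigGraph_not_adj_inl_inl_of_ne Gs hij, hij]
  · split_ifs with ha <;> simp [ha, eq_comm]

lemma bigGraph_neighborFinset_inr (i : ι) :
    (bigGraph Vt Gs).neighborFinset (Sum.inr i) =
      ({b | Odd ((Gs i).degree b)} : Finset (Vt i)).map (componentEmb i) ∪
        (univ.erase i).map Function.Embedding.inr := by
  ext (⟨j, b⟩ | j)
  · by_cases hij : j = i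
    · subst hij
      simp
    · simp [hij, Ne.symm hij]
  · simp [ne_comm]

lemma bigGraph_degree_inl (i : ι) (a : Vt i) :
    (bigGraph Vt Gs).degree (Sum.inl ⟨i, a⟩) =
      (Gs i).degree a + if Odd ((Gs i).degree a) then 1 else 0 := by
  rw [degree, bigGraph_neighborFinset_inl, card_union_of_disjoint, card_map, ← degree]
  · split_ifs <;> rfl
  · split_ifs <;> simp

lemma bigGraph_degree_inr (i : ι) :
    (bigGraph Vt Gs).degree (Sum.inr i) =
      #({b | Odd ((Gs i).degree b)} : Finset (Vt i)) + (Fintype.card ι - 1) := by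
  rw [degree, bigGraph_neighborFinset_inr, card_union_of_disjoint (disjoint_left.2 (by simp)),
    card_map, card_map, card_erase_of_mem (mem_univ i), card_univ]

lemma bigGraph_even_degree_inl (i : ι) (a : Vt i) :
    Even ((bigGraph Vt Gs).degree (Sum.inl ⟨i, a⟩)) := by
  rw [bigGraph_degree_inl]
  split_ifs with ha
  · exact ha.add_one
  · simpa using Nat.not_odd_iff_even.1 ha

variable {Gs}

lemma bigGraph_odd_degree_inr (hcard : Even (Fintype.card ι)) (i : ι) :
    Odd ((bigGraph Vt Gs).degree (Sum.inr i)) := by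
  rw [bigGraph_degree_inr]
  have hpos : 1 ≤ Fintype.card ι := Fintype.card_pos_iff.2 ⟨i⟩
  exact (even_card_odd_degree_vertices (Gs i)).add_odd (Nat.Even.sub_odd hpos hcard odd_one)

lemma bigGraph_odd_degree_iff (hcard : Even (Fintype.card ι)) (x : (Σ j, Vt j) ⊕ ι) :
    Odd ((bigGraph Vt Gs).degree x) ↔ ∃ i, x = Sum.inr i := by
  rcases x with ⟨i, a⟩ | i
  · simp [← Nat.not_even_iff_odd, bigGraph_even_degree_inl]
  · simp [bigGraph_odd_degree_inr hcard i]

lemma grundy_delVert_bigGraph_inr (hcard : Even (Fintype.card ι)) (i : ι) :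
    grundy (delVert (bigGraph Vt Gs) (Sum.inr i)) = grundy (Gs i) := by
  refine grundy_eq_of_embedding (Gs i) _ (componentEmb i) (fun a b => by simp) ?_ ?_
  · rintro a (⟨j, b⟩ | j) hv ⟨hadj, -, hne⟩
    · obtain ⟨rfl, -⟩ := hadj
      exact hv ⟨b, rfl⟩
    · obtain ⟨rfl, -⟩ := hadj
      exact hne rfl
  · rintro (⟨j, b⟩ | j) hv
    · have hji : j ≠ i := by
        rintro rfl
        exact hv ⟨b, rfl⟩
      rw [delVert_degree_of_not_adj _ (by simp) (by simp [hji])]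
      exact bigGraph_even_degree_inl Gs j b
    · by_cases hji : j = i
      · rw [hji, delVert_degree_self]
        exact Even.zero
      · rw [delVert_degree_of_adj _ (by simpa using hji) (by simpa using hji)]
        exact Nat.Odd.sub_odd (bigGraph_odd_degree_inr hcard j) odd_one

lemma grundy_bigGraph_eq_mexN (hcard : Even (Fintype.card ι)) :
    grundy (bigGraph Vt Gs) = mexN {n | ∃ i, grundy (Gs i) = n} := by
  rw [grundy]
  congr 1
  ext n
  constructor
  · rintro ⟨⟨v, hv⟩, rfl⟩
    obtain ⟨i, rfl⟩ := (bigGraph_odd_degree_iff hcard v).1 hv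
    exact ⟨i, (grundy_delVert_bigGraph_inr hcard i).symm⟩
  · rintro ⟨i, rfl⟩
    exact ⟨⟨Sum.inr i, bigGraph_odd_degree_inr hcard i⟩, grundy_delVert_bigGraph_inr hcard i⟩

end BigGraph

theorem grundy_bigGraph_general (K : ℕ) (Vt : Fin (K + 1) → Type)
    [∀ i, Fintype (Vt i)] (Gs : ∀ i, SimpleGraph (Vt i)) :
    -- the (possibly) extended index set and family, with an auxiliary `P₃`
    -- added exactly when `K` is even:
    ∀ (ι : Type) (e : ι ≃ (Fin (K + 1) ⊕ Fin (if Even K then 1 else 0))),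
    ∀ (_ : Fintype ι) (_ : DecidableEq ι),
    ∀ (Vt' : ι → Type) (_ : ∀ i, Fintype (Vt' i))
      (Gs' : ∀ i, SimpleGraph (Vt' i))
      (hVt' : ∀ i, Vt' i = Sum.elim Vt (fun _ => Fin 3) (e i))
      (hGs' : ∀ i, HEq (Gs' i) (Sum.rec (motive := fun s =>
          SimpleGraph (Sum.elim Vt (fun _ => Fin 3) s))
          (fun j => Gs j) (fun _ => SimpleGraph.pathGraph 3) (e i))),
      (∀ x : (Σ i, Vt' i) ⊕ ι,
          Odd ((bigGraph Vt' Gs').degree x) ↔ ∃ i : ι, x = Sum.inr i) ∧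
      (∀ i : ι, grundy (delVert (bigGraph Vt' Gs') (Sum.inr i)) =
          grundy (Gs' i)) ∧
      grundy (bigGraph Vt' Gs') = mexN {n | ∃ i : ι, grundy (Gs' i) = n} := by
  intro ι e _ _ Vt' _ Gs' _ _
  have hcard : Even (Fintype.card ι) := by
    rw [Fintype.card_congr e, Fintype.card_sum, Fintype.card_fin, Fintype.card_fin]
    split_ifs with hK
    · exact hK.add even_two
    · exact (Nat.not_even_iff_odd.1 hK).add_one
  exact ⟨bigGraph_odd_degree_iff hcard, grundy_delVert_bigGraph_inr hcard,
    grundy_bigGraph_eq_mexN hcard⟩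

/-- Let `G₀, …, G_K` be finite graphs, each with at least two odd-degree
vertices.  Augment the family by a copy of `P₃` when `K` is even, so that the
total number of new vertices is even, and form `G` by the construction
`bigGraph`: disjoint union of all the graphs, one new vertex `vᵢ` for each
graph joined to its odd-degree vertices, the new vertices joined pairwise.
Then the odd-degree vertices of `G` are exactly the `vᵢ`, deleting `vᵢ`
yields a position with Grundy value `g(Gᵢ)`, and consequently
`g(G) = mex {g(Gᵢ)}`. -/
theorem grundy_bigGraph (K : ℕ) (Vt : Fin (K + 1) → Type)
    [∀ i, Fintype (Vt i)] (Gs : ∀ i, SimpleGraph (Vt i))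
    (hodd : ∀ i, ∃ a b : Vt i, a ≠ b ∧
      Odd ((Gs i).degree a) ∧ Odd ((Gs i).degree b)) :
    -- the (possibly) extended index set and family, with an auxiliary `P₃`
    -- added exactly when `K` is even:
    ∀ (ι : Type) (e : ι ≃ (Fin (K + 1) ⊕ Fin (if Even K then 1 else 0))),
    ∀ (_ : Fintype ι) (_ : DecidableEq ι),
    ∀ (Vt' : ι → Type) (_ : ∀ i, Fintype (Vt' i))
      (Gs' : ∀ i, SimpleGraph (Vt' i))
      (hVt' : ∀ i, Vt' i = Sum.elim Vt (fun _ => Fin 3) (e i))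
      (hGs' : ∀ i, HEq (Gs' i) (Sum.rec (motive := fun s =>
          SimpleGraph (Sum.elim Vt (fun _ => Fin 3) s))
          (fun j => Gs j) (fun _ => SimpleGraph.pathGraph 3) (e i))),
      (∀ x : (Σ i, Vt' i) ⊕ ι,
          Odd ((bigGraph Vt' Gs').degree x) ↔ ∃ i : ι, x = Sum.inr i) ∧
      (∀ i : ι, grundy (delVert (bigGraph Vt' Gs') (Sum.inr i)) =
          grundy (Gs' i)) ∧
      grundy (bigGraph Vt' Gs') = mexN {n | ∃ i : ι, grundy (Gs' i) = n} :=
  grundy_bigGraph_general K Vt Gs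
end
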